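/- For every natural number n ≥ 0, ∫_{0}^{∞} t^n · log(1 + e^{-t}) dt = (1/(n+1)) · ∫_{0}^{∞} t^{n+1} / (1 + e^t) dt, and hence ∫_{0}^{∞} t^n · log(1 + e^{-t}) dt = n! · (1 - 2^{-1-n}) · ζ(n+2). -/

import Mathlib

/-!
For `t > 0` both `log (1 + e^{-t}) = ∑ (-1)^k e^{-(k+1)t} / (k+1)` and
`1 / (1 + e^t) = ∑ (-1)^k e^{-(k+1)t}` are exponential series, and integrating termwise against
`t^m` (the Mellin transform, `∫₀^∞ t^m e^{-pt} dt = m! / p^{m+1}`) turns the two integrals into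
`n! η(n+2)` and `(n+1)! η(n+2)`, where `η(s) = ∑ (-1)^k / (k+1)^s`. Splitting the zeta series into
even and odd terms gives `η(s) = (1 - 2^{1-s}) ζ(s)`.
-/

open Real MeasureTheory Set
open scoped Nat

open Complex in
lemma hasSum_neg_one_pow_div_nat_add_one_cpow {s : ℂ} (hs : 1 < s.re) :
    HasSum (fun k : ℕ => (-1) ^ k / ((k : ℂ) + 1) ^ s) ((1 - 2 ^ (1 - s)) * riemannZeta s) := by
  set f : ℕ → ℂ := fun k => 1 / ((k : ℂ) + 1) ^ s
  have hζ : HasSum f (riemannZeta s) := by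
    rw [zeta_eq_tsum_one_div_nat_add_one_cpow hs]
    refine Summable.hasSum ?_
    simpa [f] using (summable_nat_add_iff 1).2 (Complex.summable_one_div_nat_cpow.2 hs)
  have hodd : HasSum (fun k => f (2 * k + 1)) (2 ^ (-s) * riemannZeta s) := by
    refine (hζ.mul_left (2 ^ (-s))).congr_fun fun k => ?_
    have h := natCast_mul_natCast_cpow 2 (k + 1) s
    push_cast at h
    simp only [f, show ((2 * k + 1 : ℕ) : ℂ) + 1 = 2 * ((k : ℂ) + 1) by push_cast; ring, h,
      cpow_neg]
    field_simp
  have heven : HasSum (fun k => f (2 * k)) ((1 - 2 ^ (-s)) * riemannZeta s) := by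
    have hsum : HasSum (fun k => f (2 * k)) (∑' k, f (2 * k)) :=
      (hζ.summable.comp_injective (mul_right_injective₀ two_ne_zero)).hasSum
    have h := (hsum.even_add_odd hodd).unique hζ
    rwa [show (1 - 2 ^ (-s)) * riemannZeta s = ∑' k, f (2 * k) by linear_combination -h]
  have h := HasSum.even_add_odd (f := fun k : ℕ => (-1) ^ k / ((k : ℂ) + 1) ^ s)
    (heven.congr_fun fun k => by simp [f, pow_mul]) (hodd.neg.congr_fun fun k => by
      simp [f, pow_succ, pow_mul, neg_div])
  rwa [sub_eq_add_neg 1 s, cpow_add _ _ two_ne_zero, cpow_one,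
    show (1 - 2 * 2 ^ (-s)) * riemannZeta s =
      (1 - 2 ^ (-s)) * riemannZeta s + -(2 ^ (-s) * riemannZeta s) by ring]

lemma hasSum_neg_one_pow_div_nat_add_one_pow {p : ℕ} (hp : 1 < p) :
    HasSum (fun k : ℕ => (-1) ^ k / ((k : ℂ) + 1) ^ p)
      ((1 - 2 ^ (1 - (p : ℤ))) * riemannZeta p) := by
  have h := hasSum_neg_one_pow_div_nat_add_one_cpow (s := p) (by simpa using hp)
  simp_rw [Complex.cpow_natCast] at h
  rwa [show (1 : ℂ) - p = ((1 - p : ℤ) : ℂ) by push_cast; ring, Complex.cpow_intCast] at h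

lemma mellin_ofReal_natCast_add_one (f : ℝ → ℝ) (m : ℕ) :
    mellin (fun t => (f t : ℂ)) (m + 1) = ((∫ t in Ioi 0, t ^ m * f t : ℝ) : ℂ) := by
  simp only [mellin, add_sub_cancel_right, Complex.cpow_natCast, smul_eq_mul]
  rw [← integral_complex_ofReal]
  push_cast
  rfl

lemma hasSum_integral_pow_mul_of_hasSum_exp {ι : Type*} [Countable ι] {a p : ι → ℝ} {F : ℝ → ℝ}
    (m : ℕ) (hp : ∀ i, 0 < p i) (hF : ∀ t ∈ Ioi 0, HasSum (fun i => a i * exp (-p i * t)) (F t))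
    (ha : Summable fun i => |a i| / p i ^ (m + 1)) :
    HasSum (fun i => m ! * a i / p i ^ (m + 1)) (∫ t in Ioi 0, t ^ m * F t) := by
  have h := hasSum_mellin (a := fun i => (a i : ℂ)) (F := fun t => (F t : ℂ)) (s := m + 1)
    (fun i => Or.inr (hp i))
    (by simp only [Complex.add_re, Complex.natCast_re, Complex.one_re]; positivity)
    (fun t ht => by exact_mod_cast Complex.hasSum_ofReal.2 (hF t ht))
    (by simpa [← rpow_natCast] using ha)
  rw [mellin_ofReal_natCast_add_one, Complex.Gamma_nat_eq_factorial] at h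
  refine Complex.hasSum_ofReal.1 ?_
  convert h using 2 with i
  rw [← Nat.cast_add_one, Complex.cpow_natCast]
  push_cast
  rfl

lemma hasSum_log_one_add_exp_neg {t : ℝ} (ht : 0 < t) :
    HasSum (fun k : ℕ => (-1) ^ k / (k + 1) * exp (-(k + 1) * t)) (log (1 + exp (-t))) := by
  have h := (hasSum_pow_div_log_of_abs_lt_one (x := -exp (-t)) (by simpa using ht)).neg
  rw [neg_neg, sub_neg_eq_add] at h
  refine h.congr_fun fun k => ?_
  rw [show -((k : ℝ) + 1) * t = (k + 1 : ℕ) * -t by push_cast; ring, exp_nat_mul, neg_pow,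
    pow_succ]
  ring

lemma hasSum_one_div_one_add_exp {t : ℝ} (ht : 0 < t) :
    HasSum (fun k : ℕ => (-1) ^ k * exp (-(k + 1) * t)) (1 / (1 + exp t)) := by
  have h := (hasSum_geometric_of_norm_lt_one (ξ := -exp (-t)) (by simpa using ht)).mul_left
    (exp (-t))
  rw [show exp (-t) * (1 - -exp (-t))⁻¹ = 1 / (1 + exp t) by
    rw [sub_neg_eq_add, exp_neg]; field_simp; ring] at h
  refine h.congr_fun fun k => ?_
  rw [show -((k : ℝ) + 1) * t = (k + 1 : ℕ) * -t by push_cast; ring, exp_nat_mul, neg_pow,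
    pow_succ]
  ring

lemma summable_one_div_nat_add_one_pow {p : ℕ} (hp : 1 < p) :
    Summable fun k : ℕ => 1 / ((k : ℝ) + 1) ^ p := by
  exact_mod_cast (summable_nat_add_iff 1).2 (summable_one_div_nat_pow.2 hp)

/-- For every natural number `n ≥ 0`,
`∫_0^∞ t^n·log(1+e^{-t}) dt = (1/(n+1))·∫_0^∞ t^{n+1}/(1+e^t) dt`, and hence
`∫_0^∞ t^n·log(1+e^{-t}) dt = n!·(1 - 2^{-1-n})·ζ(n+2)`. -/
theorem integral_pow_mul_log_one_add_exp_neg (n : ℕ) :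
    (∫ t in Set.Ioi (0 : ℝ), t ^ n * Real.log (1 + Real.exp (-t))) =
        (1 / (n + 1)) * ∫ t in Set.Ioi (0 : ℝ), t ^ (n + 1) / (1 + Real.exp t) ∧
      ((∫ t in Set.Ioi (0 : ℝ), t ^ n * Real.log (1 + Real.exp (-t)) : ℝ) : ℂ) =
        (Nat.factorial n) * (1 - (2 : ℂ) ^ (-1 - (n : ℤ))) * riemannZeta (n + 2) := by
  set η : ℂ := (1 - (2 : ℂ) ^ (-1 - (n : ℤ))) * riemannZeta (n + 2)
  have hη : HasSum (fun k : ℕ => (-1) ^ k / ((k : ℂ) + 1) ^ (n + 2)) η := by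
    have h := hasSum_neg_one_pow_div_nat_add_one_pow (p := n + 2) (by omega)
    rwa [show 1 - ((n + 2 : ℕ) : ℤ) = -1 - n by push_cast; ring, Nat.cast_add, Nat.cast_two]
      at h
  have hsum := summable_one_div_nat_add_one_pow (p := n + 2) (by omega)
  have hlog := hasSum_integral_pow_mul_of_hasSum_exp n (fun k => by positivity)
    (fun t ht => hasSum_log_one_add_exp_neg ht) (hsum.congr fun k => by
      rw [abs_div, abs_neg_one_pow, abs_of_pos (by positivity), div_div, ← pow_succ'])
  have hfermi := hasSum_integral_pow_mul_of_hasSum_exp (n + 1) (fun k => by positivity)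
    (fun t ht => hasSum_one_div_one_add_exp ht) (by simpa using hsum)
  simp only [mul_one_div] at hfermi
  have hI1 := (Complex.hasSum_ofReal.2 hlog).unique
    ((hη.mul_left (n ! : ℂ)).congr_fun fun k => by push_cast; field_simp; ring)
  have hI2 := (Complex.hasSum_ofReal.2 hfermi).unique
    ((hη.mul_left ((n + 1) ! : ℂ)).congr_fun fun k => by push_cast; ring)
  refine ⟨Complex.ofReal_injective ?_, by rw [hI1]; ring⟩
  push_cast
  rw [hI1, hI2, Nat.factorial_succ]
  push_cast
  field_simp
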